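/- arXiv:1812.07972 — 2 statements merged into one kernel-verified Lean document; each statement's English description precedes it below -/
import Mathlib

section
/- Let Ω ⊂ ℝ^d be a bounded Lipschitz domain, κ > 0 a constant, f ∈ L²(Ω), and u ∈ H¹₀(Ω) the weak solution of −Δu + κ²u = f, i.e., (∇u, ∇v) + κ²(u, v) = (f, v) for all v ∈ H¹₀(Ω). Let u_h ∈ H¹₀(Ω) be arbitrary and let τ ∈ H(div, Ω). Define ε = τ − ∇u_h and r = f − κ²u_h + div τ. Then the energy norm of the error satisfies |||u − u_h||| ≤ (‖ε‖² + κ⁻²‖r‖²)^{1/2}, where |||v|||² = ‖∇v‖² + κ²‖v‖². -/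
open RealInnerProductSpace

/-- Guaranteed upper bound (Theorem 3.1, pure Dirichlet case, no oscillation).
`V` models `H¹₀(Ω)`, `L` models `L²(Ω)`, `Lv` models `L²(Ω)^d`;
`grad` is the gradient, `emb` the embedding `H¹₀ ↪ L²`, and the pair
`(τ, divτ)` models a vector field in `H(div, Ω)` together with its divergence,
which is expressed by the divergence theorem hypothesis `hdivthm`.
If `u` is the weak solution of `-Δu + κ²u = f` and `u_h` is arbitrary, then
`|||u - u_h||| ≤ (‖τ - ∇u_h‖² + κ⁻²‖f - κ²u_h + div τ‖²)^{1/2}`,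
where `|||v|||² = ‖∇v‖² + κ²‖v‖²`. -/
theorem stmt_6 {V L Lv : Type*}
    [NormedAddCommGroup V] [InnerProductSpace ℝ V]
    [NormedAddCommGroup L] [InnerProductSpace ℝ L]
    [NormedAddCommGroup Lv] [InnerProductSpace ℝ Lv]
    (grad : V →ₗ[ℝ] Lv) (emb : V →ₗ[ℝ] L)
    (κ : ℝ) (hκ : 0 < κ)
    (f : L) (u uh : V)
    (hweak : ∀ v : V, ⟪grad u, grad v⟫ + κ ^ 2 * ⟪emb u, emb v⟫ = ⟪f, emb v⟫)
    (τ : Lv) (divτ : L)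
    (hdivthm : ∀ v : V, ⟪τ, grad v⟫ + ⟪divτ, emb v⟫ = 0)
    (enorm : V → ℝ)
    (henorm : ∀ v, enorm v = Real.sqrt (‖grad v‖ ^ 2 + κ ^ 2 * ‖emb v‖ ^ 2)) :
    enorm (u - uh) ≤
      Real.sqrt (‖τ - grad uh‖ ^ 2 +
        κ⁻¹ ^ 2 * ‖f - κ ^ 2 • emb uh + divτ‖ ^ 2) := by

  set e := u - uh with he
  have h1 := hweak e
  have h2 := hdivthm e
  have hg : grad e = grad u - grad uh := by rw [he, map_sub]
  have hm : emb e = emb u - emb uh := by rw [he, map_sub]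
  set ε := τ - grad uh with hε
  set r := f - κ ^ 2 • emb uh + divτ with hr
  have key : ‖grad e‖ ^ 2 + κ ^ 2 * ‖emb e‖ ^ 2 = ⟪ε, grad e⟫ + ⟪r, emb e⟫ := by
    rw [← real_inner_self_eq_norm_sq, ← real_inner_self_eq_norm_sq]
    have expand : ⟪ε, grad e⟫ + ⟪r, emb e⟫
        = (⟪τ, grad e⟫ + ⟪divτ, emb e⟫) + ⟪f, emb e⟫
          - ⟪grad uh, grad e⟫ - κ ^ 2 * ⟪emb uh, emb e⟫ := by
      rw [hε, hr]
      simp only [inner_sub_left, inner_add_left, inner_smul_left, conj_trivial]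
      ring
    rw [expand, h2, ← h1, hg, hm]
    simp only [inner_sub_left, inner_sub_right]
    ring
  set A := ‖grad e‖ with hA
  set B := κ * ‖emb e‖ with hB
  set C := ‖ε‖ with hC
  set D := κ⁻¹ * ‖r‖ with hD
  have hA0 : 0 ≤ A := norm_nonneg _
  have hB0 : 0 ≤ B := mul_nonneg hκ.le (norm_nonneg _)
  have hC0 : 0 ≤ C := norm_nonneg _
  have hD0 : 0 ≤ D := mul_nonneg (inv_nonneg.2 hκ.le) (norm_nonneg _)
  have hB2 : κ ^ 2 * ‖emb e‖ ^ 2 = B ^ 2 := by rw [hB]; ring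
  have hD2 : κ⁻¹ ^ 2 * ‖r‖ ^ 2 = D ^ 2 := by rw [hD]; ring
  have hDB : ‖r‖ * ‖emb e‖ = D * B := by
    rw [hD, hB]
    field_simp
  have hcs1 : ⟪ε, grad e⟫ ≤ C * A := real_inner_le_norm _ _
  have hcs2 : ⟪r, emb e⟫ ≤ D * B := by
    rw [← hDB]; exact real_inner_le_norm _ _
  have hmain : A ^ 2 + B ^ 2 ≤ Real.sqrt (C ^ 2 + D ^ 2) * Real.sqrt (A ^ 2 + B ^ 2) := by
    have h3 : A ^ 2 + B ^ 2 ≤ C * A + D * B := by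
      calc A ^ 2 + B ^ 2 = ⟪ε, grad e⟫ + ⟪r, emb e⟫ := by rw [← key, hB2]
        _ ≤ C * A + D * B := add_le_add hcs1 hcs2
    have h4 : (C * A + D * B) ^ 2 ≤ (C ^ 2 + D ^ 2) * (A ^ 2 + B ^ 2) := by nlinarith [sq_nonneg (C * B - D * A)]
    have h5 : C * A + D * B ≤ Real.sqrt ((C ^ 2 + D ^ 2) * (A ^ 2 + B ^ 2)) := by
      have := Real.sqrt_le_sqrt h4
      rwa [Real.sqrt_sq (by positivity)] at this
    rw [Real.sqrt_mul (by positivity)] at h5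
    linarith
  rw [henorm, hB2, hD2]
  rcases eq_or_lt_of_le (by positivity : (0:ℝ) ≤ A ^ 2 + B ^ 2) with h0 | h0
  · rw [← h0, Real.sqrt_zero]
    positivity
  · have hsq : Real.sqrt (A ^ 2 + B ^ 2) > 0 := Real.sqrt_pos.2 h0
    have : Real.sqrt (A ^ 2 + B ^ 2) * Real.sqrt (A ^ 2 + B ^ 2)
        ≤ Real.sqrt (C ^ 2 + D ^ 2) * Real.sqrt (A ^ 2 + B ^ 2) := by
      rwa [Real.mul_self_sqrt (by positivity)]
    exact le_of_mul_le_mul_right this hsq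
end

section
/- Let Ω ⊂ ℝ^d be a bounded Lipschitz domain, u ∈ H¹₀(Ω) the weak solution of −Δu + κ²u = f with constant κ ≥ 0, and u_h ∈ H¹₀(Ω) arbitrary. Let τ ∈ H(div, Ω) be arbitrary (no equilibration assumed), and let C_F > 0 satisfy the Friedrichs–Poincaré inequality ‖v‖ ≤ C_F·|||v||| for all v ∈ H¹₀(Ω), where |||v|||² = ‖∇v‖² + κ²‖v‖². Then for any κ₀ > 0, |||u − u_h|||² ≤ (1 + κ₀²C_F²)·(‖τ − ∇u_h‖² + κ₀⁻²‖f − κ²u_h + div τ‖²). -/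
open RealInnerProductSpace

set_option maxHeartbeats 1600000 in
/-- Equilibration-free upper bound (Theorem 8.1, pure Dirichlet, constant `κ ≥ 0`).
With an arbitrary `τ ∈ H(div)`, the Friedrichs–Poincaré constant `C_F` and any
parameter `κ₀ > 0`:
`|||u - u_h|||² ≤ (1 + κ₀² C_F²)(‖τ - ∇u_h‖² + κ₀⁻²‖f - κ²u_h + div τ‖²)`. -/
theorem stmt_7 {V L Lv : Type*}
    [NormedAddCommGroup V] [InnerProductSpace ℝ V]
    [NormedAddCommGroup L] [InnerProductSpace ℝ L]
    [NormedAddCommGroup Lv] [InnerProductSpace ℝ Lv]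
    (grad : V →ₗ[ℝ] Lv) (emb : V →ₗ[ℝ] L)
    (κ : ℝ) (hκ : 0 ≤ κ)
    (f : L) (u uh : V)
    (hweak : ∀ v : V, ⟪grad u, grad v⟫ + κ ^ 2 * ⟪emb u, emb v⟫ = ⟪f, emb v⟫)
    (τ : Lv) (divτ : L)
    (hdivthm : ∀ v : V, ⟪τ, grad v⟫ + ⟪divτ, emb v⟫ = 0)
    (enorm : V → ℝ)
    (henorm : ∀ v, enorm v = Real.sqrt (‖grad v‖ ^ 2 + κ ^ 2 * ‖emb v‖ ^ 2))
    (CF : ℝ) (hCF : 0 < CF)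
    (hFriedrichs : ∀ v : V, ‖emb v‖ ≤ CF * enorm v)
    (κ₀ : ℝ) (hκ₀ : 0 < κ₀) :
    (enorm (u - uh)) ^ 2 ≤ (1 + κ₀ ^ 2 * CF ^ 2) *
      (‖τ - grad uh‖ ^ 2 + κ₀⁻¹ ^ 2 * ‖f - κ ^ 2 • emb uh + divτ‖ ^ 2) := by
  set e := u - uh with he
  set E := enorm e with hE
  have hE0 : 0 ≤ E := by rw [hE, henorm]; exact Real.sqrt_nonneg _
  have hEsq : E ^ 2 = ‖grad e‖ ^ 2 + κ ^ 2 * ‖emb e‖ ^ 2 := by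
    rw [hE, henorm, Real.sq_sqrt]
    positivity
  have h1 := hweak e
  have h2 := hdivthm e
  have key : E ^ 2 = ⟪τ - grad uh, grad e⟫ + ⟪f - κ ^ 2 • emb uh + divτ, emb e⟫ := by
    have hg : grad e = grad u - grad uh := by rw [he, map_sub]
    have hm : emb e = emb u - emb uh := by rw [he, map_sub]
    rw [hEsq]
    have hgn : ‖grad e‖ ^ 2 = ⟪grad e, grad e⟫ := (real_inner_self_eq_norm_sq _).symm
    have hen : ‖emb e‖ ^ 2 = ⟪emb e, emb e⟫ := (real_inner_self_eq_norm_sq _).symm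
    have c1 : ⟪emb u, emb uh⟫ = ⟪emb uh, emb u⟫ := real_inner_comm _ _
    have c2 : ⟪grad u, grad uh⟫ = ⟪grad uh, grad u⟫ := real_inner_comm _ _
    rw [hgn, hen]
    simp only [inner_sub_left, inner_add_left, real_inner_smul_left, hg, hm,
      inner_sub_right] at h1 h2 ⊢
    linarith
  have hb1 : ⟪τ - grad uh, grad e⟫ ≤ ‖τ - grad uh‖ * ‖grad e‖ := real_inner_le_norm _ _
  have hb2 : ⟪f - κ ^ 2 • emb uh + divτ, emb e⟫ ≤ ‖f - κ ^ 2 • emb uh + divτ‖ * ‖emb e‖ :=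
    real_inner_le_norm _ _
  -- abstract the norms as plain reals
  obtain ⟨a, ha, hA⟩ : ∃ a, 0 ≤ a ∧ ‖τ - grad uh‖ = a := ⟨_, norm_nonneg _, rfl⟩
  obtain ⟨c, hc, hC⟩ : ∃ c, 0 ≤ c ∧ ‖f - κ ^ 2 • emb uh + divτ‖ = c := ⟨_, norm_nonneg _, rfl⟩
  obtain ⟨b, hb, hB⟩ : ∃ b, 0 ≤ b ∧ ‖grad e‖ = b := ⟨_, norm_nonneg _, rfl⟩
  obtain ⟨d, hd, hD⟩ : ∃ d, 0 ≤ d ∧ ‖emb e‖ = d := ⟨_, norm_nonneg _, rfl⟩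
  have hdE : d ≤ CF * E := hD ▸ hFriedrichs e
  clear_value e E
  clear he hE hweak hdivthm henorm hFriedrichs h1 h2
  rw [hA, hB] at hb1
  rw [hC, hD] at hb2
  rw [hA, hC]
  rw [hB, hD] at hEsq
  have hbE : b ^ 2 ≤ E ^ 2 := by nlinarith [sq_nonneg (κ * d)]
  have hEle : E ^ 2 ≤ a * b + c * d := by linarith
  have hE2 : 0 ≤ E ^ 2 := sq_nonneg E
  -- write c = κ₀ * c'
  obtain ⟨c', hc'⟩ : ∃ x, x = κ₀⁻¹ * c := ⟨_, rfl⟩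
  have hcc : c = κ₀ * c' := by rw [hc']; field_simp
  have hc'2 : κ₀⁻¹ ^ 2 * c ^ 2 = c' ^ 2 := by rw [hc']; ring
  rcases eq_or_lt_of_le hE0 with hEzero | hEpos
  · have hz : E ^ 2 = 0 := by rw [← hEzero]; ring
    rw [hz]; positivity
  · have hCS : (a * b + c * d) ^ 2 ≤ (a ^ 2 + c' ^ 2) * (b ^ 2 + κ₀ ^ 2 * d ^ 2) := by
      rw [hcc]
      nlinarith [sq_nonneg (κ₀ * a * d - c' * b)]
    have hd2 : d ^ 2 ≤ CF ^ 2 * E ^ 2 := by nlinarith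
    have hBd : b ^ 2 + κ₀ ^ 2 * d ^ 2 ≤ (1 + κ₀ ^ 2 * CF ^ 2) * E ^ 2 := by
      nlinarith [mul_le_mul_of_nonneg_left hd2 (sq_nonneg κ₀)]
    have h4 : E ^ 2 * E ^ 2 ≤ ((1 + κ₀ ^ 2 * CF ^ 2) * (a ^ 2 + c' ^ 2)) * E ^ 2 := by
      calc E ^ 2 * E ^ 2 ≤ (a * b + c * d) ^ 2 := by nlinarith
        _ ≤ (a ^ 2 + c' ^ 2) * (b ^ 2 + κ₀ ^ 2 * d ^ 2) := hCS
        _ ≤ (a ^ 2 + c' ^ 2) * ((1 + κ₀ ^ 2 * CF ^ 2) * E ^ 2) :=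
            mul_le_mul_of_nonneg_left hBd (by positivity)
        _ = ((1 + κ₀ ^ 2 * CF ^ 2) * (a ^ 2 + c' ^ 2)) * E ^ 2 := by ring
    have hE2pos : 0 < E ^ 2 := by positivity
    have hfin : E ^ 2 ≤ (1 + κ₀ ^ 2 * CF ^ 2) * (a ^ 2 + c' ^ 2) :=
      le_of_mul_le_mul_right h4 hE2pos
    rw [hc'2]
    exact hfin
end
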